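/- arXiv:1610.00953 — 2 statements merged into one kernel-verified Lean document; each statement's English description precedes it below -/
import Mathlib

section
/- Let $0 < a < b$ and define $\bar{N} = (a+b)/2$ and $t_{\lim} = \frac{b(a+b)}{3b - a}$. Then for all $t$ with $a \leq t \leq t_{\lim}$, the inequality $1 - \frac{t}{\bar{N}} \geq \frac{(b-t)^2}{(b-a)(b+t)}$ holds, and for $t > t_{\lim}$ (with $t < b$) the reverse strict inequality holds. -/
/-- With `N̄ = (a+b)/2` and `t_lim = b(a+b)/(3b-a)`: for `a ≤ t ≤ t_lim` we have
`1 - t/N̄ ≥ (b-t)²/((b-a)(b+t))`, and for `t_lim < t < b` the reverse strict inequality. -/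
theorem stmt2 (a b : ℝ) (ha : 0 < a) (hab : a < b) :
    (∀ t, a ≤ t → t ≤ b * (a + b) / (3 * b - a) →
      (b - t) ^ 2 / ((b - a) * (b + t)) ≤ 1 - t / ((a + b) / 2)) ∧
    (∀ t, b * (a + b) / (3 * b - a) < t → t < b →
      1 - t / ((a + b) / 2) < (b - t) ^ 2 / ((b - a) * (b + t))) := by
  have h3 : 0 < 3 * b - a := by linarith
  have hab2 : 0 < a + b := by linarith
  constructor
  · intro t ht1 ht2
    rw [le_div_iff₀ h3] at ht2
    have hbt : 0 < b + t := by linarith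
    have hd : 0 < (b - a) * (b + t) := mul_pos (by linarith) hbt
    have ht : 1 - t / ((a + b) / 2) = (a + b - 2 * t) / (a + b) := by
      field_simp
    rw [ht, div_le_div_iff₀ hd hab2]
    have key : 0 ≤ (t - a) * (b * (a + b) - (3 * b - a) * t) :=
      mul_nonneg (by linarith) (by nlinarith)
    nlinarith [key]
  · intro t ht1 ht2
    rw [div_lt_iff₀ h3] at ht1
    have hbt : 0 < b + t := by nlinarith
    have hd : 0 < (b - a) * (b + t) := mul_pos (by linarith) hbt
    have ht : 1 - t / ((a + b) / 2) = (a + b - 2 * t) / (a + b) := by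
      field_simp
    rw [ht, div_lt_div_iff₀ hab2 hd]
    have key : 0 < (t - a) * ((3 * b - a) * t - b * (a + b)) := by
      have h1 : 0 < (3 * b - a) * t - b * (a + b) := by linarith
      have h2 : a < t := by nlinarith
      exact mul_pos (by linarith) h1
    nlinarith [key]
end

section
/- Under the energy-balance model for refrigerator door openings, the thermal time constant $\alpha_{op}$ during a door opening satisfies $\alpha_{op} \geq \alpha \cdot \left(1 + \frac{N^d}{\mu_{op}\mu_d}\, \xi\right)$, equivalently the open-door thermal resistance satisfies $R_{op} \leq R \cdot \left(1 + \frac{N^d}{\mu_{op}\mu_d}\, \xi\right)^{-1}$. -/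
/-! Solving the energy balance gives
`α_op (T_a - T̄_op) μ_op μ_d = α (T_a - T̄_cl) (μ_op μ_d + N^d ξ)`; since the open-door temperature
gap `T_a - T̄_op` is positive and at most `T_a - T̄_cl`, the open-door rate must make up the
difference. The resistance form follows from `α = 1 / (R C)` and `α_op = 1 / (R_op C)`. -/

theorem le_of_mul_eq_mul_of_le {𝕜 : Type*} [Semiring 𝕜] [LinearOrder 𝕜] [IsStrictOrderedRing 𝕜]
    {p q x y : 𝕜} (hp : 0 ≤ p) (hx : 0 < x) (hxy : x ≤ y) (h : p * x = q * y) : q ≤ p :=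
  le_of_mul_le_mul_right (h ▸ mul_le_mul_of_nonneg_left hxy hp) (hx.trans_le hxy)

theorem mul_sub_temp_eq_of_energy_balance {α αop β ξ N m Ta Tcl Top : ℝ} (hβ : β ≠ 0)
    (hbal : (α / β) * (Ta - Tcl) * (N - m) + (αop / β) * (Ta - Top) * m
      = (1 + ξ) * (α / β) * (Ta - Tcl) * N) :
    αop * m * (Ta - Top) = α * (m + N * ξ) * (Ta - Tcl) := by
  field_simp at hbal
  linarith

theorem mul_one_add_div_mul_le_iff {α αop ξ N m : ℝ} (hm : 0 < m) :
    α * (1 + N / m * ξ) ≤ αop ↔ α * (m + N * ξ) ≤ αop * m := by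
  rw [← div_le_iff₀ hm, mul_div_assoc, add_div, div_self hm.ne', mul_div_right_comm]

theorem le_mul_inv_of_inv_mul_le {R Rop C k : ℝ} (hC : 0 < C) (hR : 0 < R) (hRop : 0 < Rop)
    (hk : 0 < k) (h : 1 / (R * C) * k ≤ 1 / (Rop * C)) : Rop ≤ R * k⁻¹ := by
  rw [le_mul_inv_iff₀ hk]
  rw [div_mul_eq_mul_div, one_mul, div_le_div_iff₀ (by positivity) (by positivity)] at h
  nlinarith

theorem stmt9_general (α αop β R Rop C ξ Nd μop μd Ta Tcl Top : ℝ)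
    (hα : α = 1 / (R * C)) (hαop : αop = 1 / (Rop * C))
    (hC : 0 < C) (hR : 0 < R) (hRop : 0 < Rop)
    (hμop : 0 < μop) (hμd : 0 < μd) (hξ : 0 < ξ) (hβ : 0 < β)
    (hlt : μop * μd < Nd)
    (hT : Tcl ≤ Top) (hTa : Top < Ta)
    (hbal : (α / β) * (Ta - Tcl) * (Nd - μop * μd) + (αop / β) * (Ta - Top) * (μop * μd)
      = (1 + ξ) * (α / β) * (Ta - Tcl) * Nd) :
    α * (1 + Nd / (μop * μd) * ξ) ≤ αop ∧ Rop ≤ R * (1 + Nd / (μop * μd) * ξ)⁻¹ := by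
  have hμ : 0 < μop * μd := mul_pos hμop hμd
  have hk : 0 < 1 + Nd / (μop * μd) * ξ := by
    have := hμ.trans hlt
    positivity
  have hrate : α * (1 + Nd / (μop * μd) * ξ) ≤ αop := by
    rw [mul_one_add_div_mul_le_iff hμ]
    refine le_of_mul_eq_mul_of_le ?_ (sub_pos.2 hTa) (by linarith)
      (mul_sub_temp_eq_of_energy_balance hβ.ne' hbal)
    rw [hαop]
    positivity
  refine ⟨hrate, le_mul_inv_of_inv_mul_le hC hR hRop hk ?_⟩
  rwa [hα, hαop] at hrate

/-- Proposition 4: under the energy-balance model for door openings,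
`α_op ≥ α (1 + (N^d/(μ_op μ_d)) ξ)`, equivalently `R_op ≤ R (1 + (N^d/(μ_op μ_d)) ξ)⁻¹`. -/
theorem stmt9 (α αop β R Rop C ξ Nd μop μd Ta Tcl Top : ℝ)
    (hα : α = 1 / (R * C)) (hαop : αop = 1 / (Rop * C))
    (hC : 0 < C) (hR : 0 < R) (hRop : 0 < Rop)
    (hμop : 0 < μop) (hμd : 0 < μd) (hξ : 0 < ξ) (hβ : 0 < β)
    (hNd : Nd = 86400) (hlt : μop * μd < Nd)
    (hT : Tcl ≤ Top) (hTa : Top < Ta)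
    (hbal : (α / β) * (Ta - Tcl) * (Nd - μop * μd) + (αop / β) * (Ta - Top) * (μop * μd)
      = (1 + ξ) * (α / β) * (Ta - Tcl) * Nd) :
    α * (1 + Nd / (μop * μd) * ξ) ≤ αop ∧ Rop ≤ R * (1 + Nd / (μop * μd) * ξ)⁻¹ :=
  stmt9_general α αop β R Rop C ξ Nd μop μd Ta Tcl Top hα hαop hC hR hRop hμop hμd hξ hβ hlt hT hTa
    hbal
end
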